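/- For $|q|<1$ and complex $a$ with $|aq|<1$: $\sum_{n=1}^{\infty} \frac{a q^n}{1-aq^n} = (aq;q)_\infty \sum_{n=1}^{\infty} \frac{n\, a^n q^n}{(q;q)_n}$, where $(aq;q)_\infty = \prod_{j=1}^{\infty}(1-aq^j)$ and $(q;q)_n = \prod_{j=1}^{n}(1-q^j)$. -/

import Mathlib

/-!
Put `z = a q`, `E z = ∑ zⁿ / (q;q)_n`, `θ z = z E'(z) = ∑ n zⁿ / (q;q)_n` and
`L z = ∑_{n ≥ 0} z qⁿ / (1 - z qⁿ)`. Shifting indices gives the functional equations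
`E (z q) = (1 - z) E z`, `θ (z q) = (1 - z) θ z - z E z` and `L z = z / (1 - z) + L (z q)`.
A function `X` continuous at `0` with `X (z q) = (1 - z) X z` satisfies `X z · (z;q)_∞ = X 0`:
iterate `N` times and let `N → ∞`. For `X = E` this is Euler's identity `E z · (z;q)_∞ = 1`;
for `X = L E - θ`, which vanishes at `0`, it gives `L = (z;q)_∞ θ`.
-/

open Filter Topology Finset

lemma one_sub_ne_zero_of_norm_lt_one {z : ℂ} (hz : ‖z‖ < 1) : 1 - z ≠ 0 :=
  sub_ne_zero.2 fun h => by simp [← h] at hz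

lemma norm_mul_pow_le {q : ℂ} (hq : ‖q‖ ≤ 1) (z : ℂ) (n : ℕ) : ‖z * q ^ n‖ ≤ ‖z‖ := by
  rw [norm_mul, norm_pow]
  exact mul_le_of_le_one_right (norm_nonneg z) (pow_le_one₀ (norm_nonneg q) hq)

lemma norm_mul_pow_lt_one {q z : ℂ} (hq : ‖q‖ ≤ 1) (hz : ‖z‖ < 1) (n : ℕ) : ‖z * q ^ n‖ < 1 :=
  (norm_mul_pow_le hq z n).trans_lt hz

lemma multipliable_one_sub_mul_pow {q : ℂ} (hq : ‖q‖ < 1) (z : ℂ) :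
    Multipliable fun n : ℕ => 1 - z * q ^ n := by
  simpa [sub_eq_add_neg] using multipliable_one_add_of_summable (f := fun n : ℕ => -(z * q ^ n))
    (by simpa using (summable_geometric_of_lt_one (norm_nonneg q) hq).mul_left ‖z‖)

/-- `qPochhammer q n` is the q-Pochhammer symbol `(q;q)_n`. -/
noncomputable def qPochhammer (q : ℂ) (n : ℕ) : ℂ := ∏ j ∈ range n, (1 - q ^ (j + 1))

lemma qPochhammer_succ (q : ℂ) (n : ℕ) :
    qPochhammer q (n + 1) = qPochhammer q n * (1 - q ^ (n + 1)) :=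
  prod_range_succ _ n

lemma one_sub_pow_succ_ne_zero {q : ℂ} (hq : ‖q‖ < 1) (j : ℕ) : 1 - q ^ (j + 1) ≠ 0 :=
  one_sub_ne_zero_of_norm_lt_one <| by
    simpa [norm_pow] using pow_lt_one₀ (norm_nonneg q) hq j.succ_ne_zero

lemma qPochhammer_ne_zero {q : ℂ} (hq : ‖q‖ < 1) (n : ℕ) : qPochhammer q n ≠ 0 :=
  prod_ne_zero_iff.2 fun j _ => one_sub_pow_succ_ne_zero hq j

/-- `(q;q)_n → (q;q)_∞ ≠ 0`, so the inverses converge and are bounded. -/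
lemma exists_norm_inv_qPochhammer_le {q : ℂ} (hq : ‖q‖ < 1) :
    ∃ C, ∀ n, ‖(qPochhammer q n)⁻¹‖ ≤ C := by
  have hlim : Tendsto (qPochhammer q) atTop (𝓝 (∏' j : ℕ, (1 - q ^ (j + 1)))) :=
    (ModularForm.multipliable_one_sub_pow hq).hasProd.tendsto_prod_nat
  have hne : ∏' j : ℕ, (1 - q ^ (j + 1)) ≠ 0 := by
    have hterm (j : ℕ) : 1 + -q ^ (j + 1) ≠ 0 := by
      simpa [← sub_eq_add_neg] using one_sub_pow_succ_ne_zero hq j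
    have hsum : Summable fun j : ℕ => ‖-q ^ (j + 1)‖ := by
      simpa [summable_nat_add_iff] using summable_geometric_of_lt_one (norm_nonneg q) hq
    simpa [sub_eq_add_neg] using tprod_one_add_ne_zero_of_summable hterm hsum
  obtain ⟨C, hC⟩ := (hlim.inv₀ hne).norm.bddAbove_range
  exact ⟨C, fun n => hC ⟨n, rfl⟩⟩

/-- `qSeries q 1 = E` and `qSeries q (↑) = θ`. -/
noncomputable def qSeries (q : ℂ) (f : ℕ → ℂ) (z : ℂ) : ℂ :=
  ∑' n, f n * z ^ n / qPochhammer q n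

section qSeries

variable {q z : ℂ} {f : ℕ → ℂ} {k : ℕ}

lemma norm_qSeries_term_le {C r : ℝ} (hC : ∀ n, ‖(qPochhammer q n)⁻¹‖ ≤ C)
    (hf : ∀ n, ‖f n‖ ≤ (n : ℝ) ^ k) (hz : ‖z‖ ≤ r) (n : ℕ) :
    ‖f n * z ^ n / qPochhammer q n‖ ≤ (n : ℝ) ^ k * r ^ n * C := by
  rw [div_eq_mul_inv, norm_mul, norm_mul, norm_pow]
  have hr : 0 ≤ r := (norm_nonneg z).trans hz
  gcongr
  · exact hf n
  · exact hC n

lemma summable_pow_mul_geometric_mul {r : ℝ} (hr0 : 0 ≤ r) (hr : r < 1) (k : ℕ) (C : ℝ) :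
    Summable fun n : ℕ => (n : ℝ) ^ k * r ^ n * C :=
  (summable_pow_mul_geometric_of_norm_lt_one k (by rwa [Real.norm_of_nonneg hr0])).mul_right C

lemma summable_qSeries (hq : ‖q‖ < 1) (hf : ∀ n, ‖f n‖ ≤ (n : ℝ) ^ k) (hz : ‖z‖ < 1) :
    Summable fun n => f n * z ^ n / qPochhammer q n := by
  obtain ⟨C, hC⟩ := exists_norm_inv_qPochhammer_le hq
  exact .of_norm_bounded (summable_pow_mul_geometric_mul (norm_nonneg z) hz k C)
    (norm_qSeries_term_le hC hf le_rfl)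

lemma tendsto_qSeries_nhds_zero (hq : ‖q‖ < 1) (hf : ∀ n, ‖f n‖ ≤ (n : ℝ) ^ k) :
    Tendsto (qSeries q f) (𝓝 0) (𝓝 (f 0)) := by
  obtain ⟨C, hC⟩ := exists_norm_inv_qPochhammer_le hq
  have hlim : Tendsto (qSeries q f) (𝓝 0)
      (𝓝 (∑' n, f n * 0 ^ n / qPochhammer q n)) := by
    refine tendsto_tsum_of_dominated_convergence
      (summable_pow_mul_geometric_mul (by norm_num) (by norm_num : (1 / 2 : ℝ) < 1) k C)
      (fun n => ?_) ?_
    · exact (((continuous_pow n).tendsto 0).const_mul (f n)).div_const _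
    · filter_upwards [Metric.closedBall_mem_nhds (0 : ℂ) (by norm_num : (0 : ℝ) < 1 / 2)]
        with w hw
      exact norm_qSeries_term_le hC hf (by simpa using hw)
  rwa [tsum_eq_single 0 fun n hn => by simp [hn], pow_zero, mul_one, qPochhammer,
    prod_range_zero, div_one] at hlim

lemma qSeries_sub_qSeries_mul (hq : ‖q‖ < 1) (hf : ∀ n, ‖f n‖ ≤ (n : ℝ) ^ k) (hz : ‖z‖ < 1) :
    qSeries q f z - qSeries q f (z * q) = z * qSeries q (fun n => f (n + 1)) z := by
  have hzq : ‖z * q‖ < 1 := by simpa using norm_mul_pow_lt_one hq.le hz 1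
  have hs₁ := summable_qSeries hq hf hz
  have hs₂ := summable_qSeries hq hf hzq
  rw [qSeries, qSeries, ← hs₁.tsum_sub hs₂, (hs₁.sub hs₂).tsum_eq_zero_add, qSeries,
    ← tsum_mul_left]
  simp only [pow_zero, sub_self, zero_add]
  refine tsum_congr fun n => ?_
  have hQ := qPochhammer_ne_zero hq n
  have hqn := one_sub_pow_succ_ne_zero hq n
  rw [qPochhammer_succ]
  field_simp
  ring

end qSeries

lemma qSeries_one_mul {q z : ℂ} (hq : ‖q‖ < 1) (hz : ‖z‖ < 1) :
    qSeries q 1 (z * q) = (1 - z) * qSeries q 1 z := by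
  have h := qSeries_sub_qSeries_mul (f := 1) (k := 0) hq (by simp) hz
  simp only [Pi.one_apply] at h
  linear_combination -h

lemma qSeries_natCast_mul {q z : ℂ} (hq : ‖q‖ < 1) (hz : ‖z‖ < 1) :
    qSeries q (↑) (z * q) = (1 - z) * qSeries q (↑) z - z * qSeries q 1 z := by
  have h := qSeries_sub_qSeries_mul (f := (↑)) (k := 1) hq (by simp) hz
  have hsplit : qSeries q (fun n => ((n + 1 : ℕ) : ℂ)) z = qSeries q (↑) z + qSeries q 1 z := by
    have hθ := summable_qSeries (f := (↑)) (k := 1) hq (by simp) hz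
    have hE := summable_qSeries (f := 1) (k := 0) hq (by simp) hz
    rw [qSeries, qSeries, qSeries, ← hθ.tsum_add hE]
    exact tsum_congr fun n => by push_cast [Pi.one_apply]; ring
  linear_combination -h - z * hsplit

noncomputable def lambertSeries (q z : ℂ) : ℂ := ∑' n : ℕ, z * q ^ n / (1 - z * q ^ n)

section lambertSeries

variable {q z : ℂ}

lemma norm_lambertSeries_term_le {r : ℝ} (hq : ‖q‖ ≤ 1) (hr : r < 1) (hz : ‖z‖ ≤ r) (n : ℕ) :
    ‖z * q ^ n / (1 - z * q ^ n)‖ ≤ r / (1 - r) * ‖q‖ ^ n := by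
  have hnum : ‖z * q ^ n‖ = ‖z‖ * ‖q‖ ^ n := by rw [norm_mul, norm_pow]
  have hden : 1 - r ≤ ‖1 - z * q ^ n‖ := by
    have := norm_sub_norm_le (1 : ℂ) (z * q ^ n)
    rw [norm_one] at this
    linarith [norm_mul_pow_le hq z n]
  rw [norm_div, hnum, div_mul_eq_mul_div, div_le_div_iff₀ (by linarith) (by linarith)]
  have := (norm_nonneg z).trans hz
  have := pow_nonneg (norm_nonneg q) n
  gcongr

lemma summable_lambertSeries (hq : ‖q‖ < 1) (hz : ‖z‖ < 1) :
    Summable fun n : ℕ => z * q ^ n / (1 - z * q ^ n) :=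
  .of_norm_bounded ((summable_geometric_of_lt_one (norm_nonneg q) hq).mul_left _)
    (norm_lambertSeries_term_le hq.le hz le_rfl)

lemma lambertSeries_eq_add_lambertSeries_mul (hq : ‖q‖ < 1) (hz : ‖z‖ < 1) :
    lambertSeries q z = z / (1 - z) + lambertSeries q (z * q) := by
  rw [lambertSeries, (summable_lambertSeries hq hz).tsum_eq_zero_add, lambertSeries]
  simp only [pow_zero, mul_one, pow_succ', mul_assoc]

lemma tendsto_lambertSeries_nhds_zero (hq : ‖q‖ < 1) :
    Tendsto (lambertSeries q) (𝓝 0) (𝓝 0) := by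
  have hlim : Tendsto (lambertSeries q) (𝓝 0)
      (𝓝 (∑' n : ℕ, 0 * q ^ n / (1 - 0 * q ^ n))) := by
    refine tendsto_tsum_of_dominated_convergence
      ((summable_geometric_of_lt_one (norm_nonneg q) hq).mul_left ((1 / 2) / (1 - 1 / 2)))
      (fun n => ?_) ?_
    · exact ContinuousAt.tendsto (by fun_prop (disch := simp))
    · filter_upwards [Metric.closedBall_mem_nhds (0 : ℂ) (by norm_num : (0 : ℝ) < 1 / 2)]
        with w hw
      exact norm_lambertSeries_term_le hq.le (by norm_num) (by simpa using hw)
  simpa using hlim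

end lambertSeries

lemma map_mul_pow_eq_mul_prod {q z : ℂ} {X : ℂ → ℂ} (hq : ‖q‖ ≤ 1)
    (hX : ∀ w : ℂ, ‖w‖ < 1 → X (w * q) = (1 - w) * X w) (hz : ‖z‖ < 1) (N : ℕ) :
    X (z * q ^ N) = X z * ∏ j ∈ range N, (1 - z * q ^ j) := by
  induction N with
  | zero => simp
  | succ N ih =>
    rw [pow_succ, ← mul_assoc, hX _ (norm_mul_pow_lt_one hq hz N), ih, prod_range_succ]
    ring

lemma mul_tprod_eq_of_map_mul {q z ℓ : ℂ} {X : ℂ → ℂ} (hq : ‖q‖ < 1)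
    (hX : ∀ w : ℂ, ‖w‖ < 1 → X (w * q) = (1 - w) * X w) (hℓ : Tendsto X (𝓝 0) (𝓝 ℓ))
    (hz : ‖z‖ < 1) : X z * ∏' j : ℕ, (1 - z * q ^ j) = ℓ := by
  have hzq : Tendsto (fun N : ℕ => z * q ^ N) atTop (𝓝 0) := by
    simpa using (tendsto_pow_atTop_nhds_zero_of_norm_lt_one hq).const_mul z
  refine tendsto_nhds_unique ?_ (hℓ.comp hzq)
  refine ((multipliable_one_sub_mul_pow hq z).hasProd.tendsto_prod_nat.const_mul (X z)).congr
    fun N => ?_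
  exact (map_mul_pow_eq_mul_prod hq.le hX hz N).symm

lemma qSeries_one_mul_tprod {q z : ℂ} (hq : ‖q‖ < 1) (hz : ‖z‖ < 1) :
    qSeries q 1 z * ∏' j : ℕ, (1 - z * q ^ j) = 1 :=
  mul_tprod_eq_of_map_mul hq (fun _ hw => qSeries_one_mul hq hw)
    (tendsto_qSeries_nhds_zero (k := 0) hq (by simp)) hz

lemma lambertSeries_eq_tprod_mul_qSeries {q z : ℂ} (hq : ‖q‖ < 1) (hz : ‖z‖ < 1) :
    lambertSeries q z = (∏' j : ℕ, (1 - z * q ^ j)) * qSeries q (↑) z := by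
  set D : ℂ → ℂ := fun w => lambertSeries q w * qSeries q 1 w - qSeries q (↑) w
  have hD : ∀ w : ℂ, ‖w‖ < 1 → D (w * q) = (1 - w) * D w := by
    intro w hw
    have hL := lambertSeries_eq_add_lambertSeries_mul hq hw
    have h1w := one_sub_ne_zero_of_norm_lt_one hw
    simp only [D, qSeries_one_mul hq hw, qSeries_natCast_mul hq hw, hL]
    field_simp
    ring
  have hD0 : Tendsto D (𝓝 0) (𝓝 0) := by
    simpa using ((tendsto_lambertSeries_nhds_zero hq).mul
      (tendsto_qSeries_nhds_zero (f := 1) (k := 0) hq (by simp))).sub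
      (tendsto_qSeries_nhds_zero (f := (↑)) (k := 1) hq (by simp))
  linear_combination mul_tprod_eq_of_map_mul hq hD hD0 hz -
    lambertSeries q z * qSeries_one_mul_tprod hq hz

theorem stmt_12 (a q : ℂ) (hq : ‖q‖ < 1)
    (ha : ‖a * q‖ < 1) :
    ∑' n : ℕ, a * q ^ (n + 1) / (1 - a * q ^ (n + 1))
      = (∏' j : ℕ, (1 - a * q ^ (j + 1)))
        * ∑' n : ℕ, (n + 1 : ℂ) * a ^ (n + 1) * q ^ (n + 1)
            / ∏ j ∈ Finset.range (n + 1), (1 - q ^ (j + 1)) := by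
  have hL : ∑' n : ℕ, a * q ^ (n + 1) / (1 - a * q ^ (n + 1)) = lambertSeries q (a * q) :=
    tsum_congr fun n => by ring_nf
  have hP : ∏' j : ℕ, (1 - a * q ^ (j + 1)) = ∏' j : ℕ, (1 - a * q * q ^ j) :=
    tprod_congr fun j => by ring
  have hθ : ∑' n : ℕ, (n + 1 : ℂ) * a ^ (n + 1) * q ^ (n + 1)
      / ∏ j ∈ Finset.range (n + 1), (1 - q ^ (j + 1)) = qSeries q (↑) (a * q) := by
    rw [qSeries, (summable_qSeries (k := 1) hq (by simp) ha).tsum_eq_zero_add]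
    simp only [CharP.cast_eq_zero, zero_mul, zero_div, zero_add, qPochhammer]
    exact tsum_congr fun n => by push_cast; ring
  rw [hL, hP, hθ, lambertSeries_eq_tprod_mul_qSeries hq ha]
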